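/- arXiv:1210.7460 — 8 statements merged into one kernel-verified Lean document; each statement's English description precedes it below -/
import Mathlib

section
/- Every bounded pure subgroup M of an abelian group N is a direct summand of N, i.e., there exists a subgroup C of N with N = M ⊕ C (M ∩ C = 0 and M + C = N). -/
/-!
Induct on the bound `n`. Write `n = p * t` with `p` prime. Then `pM` is a pure subgroup of `pN`
killed by `t`, so by induction `pN = pM ⊕ C₀`; purity gives `M ∩ pN = pM`, hence `M ∩ C₀ = 0`.
Enlarge `C₀` by Zorn to a subgroup `C` maximal with `M ∩ C = 0`. For `x ∈ N` write
`p x = p m + c₀` with `m ∈ M`, `c₀ ∈ C₀`; then `y = x - m` satisfies `p y ∈ C`, and maximality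
of `C` forces `y ∈ M + C`: otherwise some `w = c + j y ≠ 0` lies in `M`, where `p ∤ j` since
`w ∉ C`, and Bézout for `p` and `j` puts `y` in `M + C` after all.
-/

open Pointwise

namespace AddSubgroup

variable {N : Type*} [AddCommGroup N]

def IsPure (M : AddSubgroup N) : Prop :=
  ∀ m : ℕ, 1 ≤ m → ∀ x ∈ M, (∃ y : N, m • y = x) → ∃ z ∈ M, m • z = x

theorem mem_of_zsmul_mem_of_isCoprime {H : AddSubgroup N} {a b : ℤ} (hab : IsCoprime a b)
    {y : N} (ha : a • y ∈ H) (hb : b • y ∈ H) : y ∈ H := by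
  obtain ⟨u, v, huv⟩ := hab
  have hy : y = u • a • y + v • b • y := by
    rw [smul_smul, smul_smul, ← add_smul, huv, one_smul]
  rw [hy]
  exact H.add_mem (H.zsmul_mem ha u) (H.zsmul_mem hb v)

theorem exists_le_maximal_disjoint {M C₀ : AddSubgroup N} (h : Disjoint M C₀) :
    ∃ C, C₀ ≤ C ∧ Maximal (Disjoint M) C := by
  refine zorn_le_nonempty₀ {D | Disjoint M D} (fun c hc hchain D hD => ?_) C₀ h
  refine ⟨sSup c, disjoint_def.mpr fun {x} hxM hx => ?_, fun _ => le_sSup⟩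
  obtain ⟨E, hE, hxE⟩ := (mem_sSup_of_directedOn ⟨D, hD⟩ hchain.directedOn).mp hx
  exact disjoint_def.mp (hc hE) hxM hxE

theorem mem_sup_of_maximal_disjoint_of_nsmul_mem {M C : AddSubgroup N}
    (hC : Maximal (Disjoint M) C) {p : ℕ} (hp : p.Prime) {y : N} (hy : p • y ∈ C) :
    y ∈ M ⊔ C := by
  by_contra hyMC
  have hlt : C < C ⊔ zmultiples y :=
    left_lt_sup.mpr fun h => hyMC (mem_sup_right (h (mem_zmultiples y)))
  obtain ⟨w, hwM, hw, hw0⟩ : ∃ w ∈ M, w ∈ C ⊔ zmultiples y ∧ w ≠ 0 := by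
    simpa [disjoint_def] using hC.not_prop_of_gt hlt
  obtain ⟨c, hc, _, ⟨j, rfl⟩, rfl⟩ := mem_sup.mp hw
  by_cases hpj : (p : ℤ) ∣ j
  · obtain ⟨k, rfl⟩ := hpj
    have hjy : ((p : ℤ) * k) • y ∈ C := by
      rw [mul_comm, mul_smul, natCast_zsmul]
      exact C.zsmul_mem hy k
    exact hw0 (disjoint_def.mp hC.prop hwM (C.add_mem hc hjy))
  · have hcop : IsCoprime (p : ℤ) j :=
      (Nat.prime_iff_prime_int.mp hp).coprime_iff_not_dvd.mpr hpj
    refine hyMC (mem_of_zsmul_mem_of_isCoprime hcop ?_ ?_)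
    · rw [natCast_zsmul]
      exact mem_sup_right hy
    · rw [show j • y = (c + j • y) - c by abel]
      exact sub_mem (mem_sup_left hwM) (mem_sup_right hc)

theorem exists_isCompl_of_disjoint_of_nsmul_top_le {M C₀ : AddSubgroup N} {p : ℕ}
    (hp : p.Prime) (hdisj : Disjoint M C₀) (hle : p • (⊤ : AddSubgroup N) ≤ p • M ⊔ C₀) :
    ∃ C, IsCompl M C := by
  obtain ⟨C, hC₀C, hC⟩ := exists_le_maximal_disjoint hdisj
  refine ⟨C, hC.prop, codisjoint_iff.mpr ((eq_top_iff' _).mpr fun x => ?_)⟩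
  obtain ⟨pm, hpm, c₀, hc₀, hpx⟩ := mem_sup.mp (hle (smul_mem_pointwise_smul x p ⊤ trivial))
  obtain ⟨m, hm, rfl⟩ := (mem_smul_pointwise_iff_exists _ _ _).mp hpm
  have hy : p • (x - m) ∈ C := by
    rw [smul_sub, ← hpx, add_sub_cancel_left]
    exact hC₀C hc₀
  simpa using add_mem (mem_sup_of_maximal_disjoint_of_nsmul_mem hC hp hy) (mem_sup_left hm)

theorem IsCompl.map_subtype_addSubgroupOf {K H : AddSubgroup N} (hKH : K ≤ H)
    {C' : AddSubgroup H} (hC' : IsCompl (K.addSubgroupOf H) C') :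
    Disjoint K (C'.map H.subtype) ∧ K ⊔ C'.map H.subtype = H := by
  have hK : (K.addSubgroupOf H).map H.subtype = K := by
    rw [addSubgroupOf_map_subtype, inf_of_le_left hKH]
  constructor
  · rw [disjoint_iff, ← hK, ← map_inf_eq _ _ _ H.subtype_injective, hC'.inf_eq_bot, map_bot]
  · rw [← hK, ← map_sup, hC'.sup_eq_top, ← AddMonoidHom.range_eq_map, range_subtype]

theorem IsPure.disjoint_of_disjoint_nsmul {M C : AddSubgroup N} (hM : M.IsPure) {m : ℕ}
    (hm : 1 ≤ m) (hC : C ≤ m • ⊤) (h : Disjoint (m • M) C) : Disjoint M C := by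
  refine disjoint_def.mpr fun {x} hxM hxC => disjoint_def.mp h ?_ hxC
  obtain ⟨y, -, hy⟩ := (mem_smul_pointwise_iff_exists _ _ _).mp (hC hxC)
  obtain ⟨z, hz, rfl⟩ := hM m hm x hxM ⟨y, hy⟩
  exact smul_mem_pointwise_smul z m M hz

theorem IsPure.nsmul_addSubgroupOf {M : AddSubgroup N} (hM : M.IsPure) {p : ℕ} (hp : 1 ≤ p) :
    ((p • M).addSubgroupOf (p • ⊤)).IsPure := by
  rintro m hm ⟨x, hx⟩ hxpM ⟨⟨_, hy⟩, hmy⟩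
  obtain ⟨w, -, rfl⟩ := (mem_smul_pointwise_iff_exists _ _ _).mp hy
  obtain ⟨x₀, hx₀, rfl⟩ := (mem_smul_pointwise_iff_exists _ _ _).mp (mem_addSubgroupOf.mp hxpM)
  obtain ⟨z, hz, hmpz⟩ := hM (m * p) (Nat.mul_pos hm hp)
    (p • x₀) (M.nsmul_mem hx₀ p) ⟨w, by simpa [mul_smul] using congrArg Subtype.val hmy⟩
  refine ⟨⟨p • z, smul_mem_pointwise_smul z p ⊤ trivial⟩,
    mem_addSubgroupOf.mpr (smul_mem_pointwise_smul z p M hz), Subtype.ext ?_⟩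
  simpa [mul_smul] using hmpz

theorem IsPure.exists_isCompl_of_nsmul_eq_zero {M : AddSubgroup N} (hM : M.IsPure) {n : ℕ}
    (hn : 1 ≤ n) (hbound : ∀ x ∈ M, n • x = 0) : ∃ C, IsCompl M C := by
  induction n using Nat.strong_induction_on generalizing N with
  | _ n ih =>
  obtain rfl | hn1 := hn.eq_or_lt
  · obtain rfl : M = ⊥ := (eq_bot_iff_forall M).mpr fun x hx => by simpa using hbound x hx
    exact ⟨⊤, isCompl_bot_top⟩
  obtain ⟨p, hp, t, rfl⟩ := Nat.exists_prime_and_dvd hn1.ne'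
  have ht : 1 ≤ t := Nat.pos_of_mul_pos_left hn
  have hbound' : ∀ x ∈ (p • M).addSubgroupOf (p • ⊤), t • x = 0 := by
    intro x hx
    obtain ⟨x₀, hx₀, hpx₀⟩ := (mem_smul_pointwise_iff_exists _ _ _).mp (mem_addSubgroupOf.mp hx)
    refine Subtype.ext ?_
    simpa [← hpx₀, smul_smul, mul_comm t p] using hbound x₀ hx₀
  obtain ⟨C', hC'⟩ := ih t (lt_mul_left ht hp.one_lt) (hM.nsmul_addSubgroupOf hp.one_le) ht hbound'
  obtain ⟨hdisj, hsup⟩ := IsCompl.map_subtype_addSubgroupOf (map_mono le_top) hC'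
  exact exists_isCompl_of_disjoint_of_nsmul_top_le hp
    (hM.disjoint_of_disjoint_nsmul hp.one_le (map_subtype_le C') hdisj) hsup.ge

end AddSubgroup

universe u

/-- Every bounded pure subgroup `M` of an abelian group `N` is a direct
summand of `N`: there is a subgroup `C` of `N` with `M ∩ C = 0` and `M + C = N`.
Here `M` is bounded means `n • M = 0` for some `n ≥ 1`, and `M` is pure means
`M ∩ mN = mM` for all `m ≥ 1` (the nontrivial inclusion being `M ∩ mN ⊆ mM`). -/
theorem bounded_pure_subgroup_is_direct_summand
    {N : Type u} [AddCommGroup N] (M : AddSubgroup N)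
    (n : ℕ) (hn : 1 ≤ n) (hbound : ∀ x ∈ M, n • x = 0)
    (hpure : ∀ m : ℕ, 1 ≤ m → ∀ x ∈ M, (∃ y : N, m • y = x) → ∃ z ∈ M, m • z = x) :
    ∃ C : AddSubgroup N, M ⊓ C = ⊥ ∧ M ⊔ C = ⊤ := by
  obtain ⟨C, hC⟩ := AddSubgroup.IsPure.exists_isCompl_of_nsmul_eq_zero hpure hn hbound
  exact ⟨C, hC.inf_eq_bot, hC.sup_eq_top⟩
end

section
/- Let B and C be subgroups of an abelian group A with C ∩ B = 0, and assume C is maximal among the subgroups of A whose intersection with B is 0. Let p be a prime and a ∈ A. If pa ∈ C, then a ∈ B + C. -/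
/-!
If `a ∉ C`, maximality makes `C + ℤa` meet `B` in some `b = c + n • a ≠ 0`. Then `p ∤ n`,
since otherwise `n • a ∈ C` and `b ∈ C ∩ B = 0`. So `p` and `n` are coprime, and Bézout writes
`a` as a combination of `p • a ∈ C` and `n • a = b - c ∈ B + C`.
-/

universe u

namespace AddSubgroup

variable {A : Type*} [AddCommGroup A]

theorem mem_of_zsmul_mem_of_isCoprime_s2 {H : AddSubgroup A} {a : A} {m n : ℤ}
    (hmn : IsCoprime m n) (hm : m • a ∈ H) (hn : n • a ∈ H) : a ∈ H := by
  obtain ⟨u, v, huv⟩ := hmn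
  have hbezout : a = u • (m • a) + v • (n • a) := by
    rw [smul_smul, smul_smul, ← add_zsmul, huv, one_zsmul]
  rw [hbezout]
  exact add_mem (zsmul_mem hm u) (zsmul_mem hn v)

theorem exists_add_zsmul_mem_ne_zero_of_notMem {B C : AddSubgroup A}
    (hmax : ∀ C' : AddSubgroup A, C ≤ C' → C' ⊓ B = ⊥ → C' = C) {a : A} (ha : a ∉ C) :
    ∃ c ∈ C, ∃ n : ℤ, c + n • a ∈ B ∧ c + n • a ≠ 0 := by
  by_contra! hB
  apply ha
  rw [← hmax (C ⊔ zmultiples a) le_sup_left ?_]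
  · exact mem_sup_right (mem_zmultiples a)
  rw [eq_bot_iff_forall]
  rintro _ ⟨hbC', hbB⟩
  obtain ⟨c, hc, _, ⟨n, rfl⟩, rfl⟩ := mem_sup.mp hbC'
  exact hB c hc n hbB

end AddSubgroup

/-- Let `B` and `C` be subgroups of an abelian group `A` with
`C ∩ B = 0`, and assume `C` is maximal among the subgroups of `A` whose intersection
with `B` is `0`.  Let `p` be a prime and `a ∈ A`.  If `p • a ∈ C`, then `a ∈ B + C`. -/
theorem mem_sup_of_prime_smul_mem
    {A : Type u} [AddCommGroup A] (B C : AddSubgroup A)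
    (hCB : C ⊓ B = ⊥)
    (hmax : ∀ C' : AddSubgroup A, C ≤ C' → C' ⊓ B = ⊥ → C' = C)
    (p : ℕ) (hp : p.Prime) (a : A) (ha : p • a ∈ C) :
    a ∈ B ⊔ C := by
  by_cases haC : a ∈ C
  · exact AddSubgroup.mem_sup_right haC
  obtain ⟨c, hc, n, hbB, hb0⟩ := AddSubgroup.exists_add_zsmul_mem_ne_zero_of_notMem hmax haC
  have hpa : (p : ℤ) • a ∈ C := by rwa [natCast_zsmul]
  have hndvd : ¬ (p : ℤ) ∣ n := by
    rintro ⟨k, rfl⟩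
    have hbCB : c + (p * k : ℤ) • a ∈ C ⊓ B :=
      ⟨add_mem hc (by rw [mul_comm, mul_zsmul]; exact zsmul_mem hpa k), hbB⟩
    rw [hCB, AddSubgroup.mem_bot] at hbCB
    exact hb0 hbCB
  have hna : n • a ∈ B ⊔ C := by
    rw [← add_sub_cancel_left c (n • a)]
    exact sub_mem (AddSubgroup.mem_sup_left hbB) (AddSubgroup.mem_sup_right hc)
  exact AddSubgroup.mem_of_zsmul_mem_of_isCoprime_s2
    ((Nat.prime_iff_prime_int.mp hp).coprime_iff_not_dvd.mpr hndvd)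
    (AddSubgroup.mem_sup_right hpa) hna
end

section
/- Let N be an abelian group, l a prime, n ≥ 1 an integer, and M a subgroup of N with M ∩ lⁿN = 0 that is maximal among subgroups with this property. Then M is a pure subgroup of N; more precisely, M ∩ lʳN ⊆ lʳM for every integer r ≥ 0. -/
/-!
If `l • w ∈ M` but `w ∉ M`, maximality yields `m + t • w = lⁿ • u ≠ 0` with `m ∈ M`. Then `l ∤ t`,
and since `l ^ (n + 1)` kills `w`, inverting `t` modulo `l ^ (n + 1)` puts `w` in `M + lⁿN`.
So `w` may be replaced by an element of `M` with the same `l`-multiple and differing from `w` by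
an element of `lⁿN ⊆ lʳN` (`r ≤ n`); induction on `r` gives `M ∩ lʳN ⊆ lʳM`. For `m = lʳk` with
`l ∤ k`, multiplication by `k` is invertible on `M`, which is killed by `lⁿ`.
-/

def AvoidsMultiples {N : Type*} [AddCommGroup N] (k : ℕ) (M : AddSubgroup N) : Prop :=
  ∀ x ∈ M, (∃ y : N, k • y = x) → x = 0

section AddCommGroup

variable {N : Type*} [AddCommGroup N]

theorem exists_zsmul_zsmul_eq_of_isCoprime {t : ℤ} {a : ℕ} (h : IsCoprime t a) {z : N}
    (hz : a • z = 0) : ∃ c : ℤ, c • t • z = z := by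
  obtain ⟨c, d, hcd⟩ := h
  refine ⟨c, ?_⟩
  calc c • t • z = (c * t + d * a) • z := by
        rw [add_smul, mul_smul d, natCast_zsmul, hz, smul_zero, add_zero, mul_smul]
    _ = z := by rw [hcd, one_smul]

namespace AvoidsMultiples

variable {k : ℕ} {M : AddSubgroup N}

theorem nsmul_eq_zero (hM : AvoidsMultiples k M) {x : N} (hx : x ∈ M) : k • x = 0 :=
  hM _ (nsmul_mem hx k) ⟨x, rfl⟩

end AvoidsMultiples

namespace Maximal

variable {l n : ℕ} {M : AddSubgroup N}

theorem exists_add_zsmul_eq_nsmul {k : ℕ} (hM : Maximal (AvoidsMultiples k) M) {w : N}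
    (hw : w ∉ M) :
    ∃ m ∈ M, ∃ t : ℤ, ∃ u : N, m + t • w = k • u ∧ m + t • w ≠ 0 := by
  have hnot : ¬ AvoidsMultiples k (M ⊔ AddSubgroup.zmultiples w) := fun h =>
    hw (hM.le_of_ge h le_sup_left (AddSubgroup.mem_sup_right (AddSubgroup.mem_zmultiples w)))
  simp only [AvoidsMultiples, not_forall, AddSubgroup.mem_sup,
    AddSubgroup.mem_zmultiples_iff] at hnot
  obtain ⟨_, ⟨m, hm, _, ⟨t, rfl⟩, rfl⟩, ⟨u, hu⟩, hne⟩ := hnot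
  exact ⟨m, hm, t, u, hu.symm, hne⟩

theorem exists_mem_sub_eq_pow_nsmul (hl : l.Prime) (hM : Maximal (AvoidsMultiples (l ^ n)) M)
    {w : N} (hw : l • w ∈ M) : ∃ m ∈ M, l • m = l • w ∧ ∃ v : N, w - m = l ^ n • v := by
  suffices h : ∃ m ∈ M, ∃ v : N, w - m = l ^ n • v by
    obtain ⟨m, hm, v, hv⟩ := h
    refine ⟨m, hm, ?_, v, hv⟩
    have hdiff : l • w - l • m = l ^ n • l • v := by rw [← smul_sub, hv, smul_comm]
    have := hM.prop _ (sub_mem hw (nsmul_mem hm l)) ⟨_, hdiff.symm⟩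
    exact (sub_eq_zero.mp this).symm
  by_cases hwM : w ∈ M
  · exact ⟨w, hwM, 0, by simp⟩
  obtain ⟨m, hm, t, u, hu, hne⟩ := hM.exists_add_zsmul_eq_nsmul hwM
  have hndvd : ¬ (l : ℤ) ∣ t := by
    rintro ⟨s, rfl⟩
    refine hne (hM.prop _ ?_ ⟨u, hu.symm⟩)
    rw [mul_comm, mul_smul, natCast_zsmul]
    exact add_mem hm (zsmul_mem hw s)
  have hcop : IsCoprime t ((l ^ (n + 1) : ℕ) : ℤ) := by
    rw [Nat.cast_pow]
    exact ((Nat.prime_iff_prime_int.mp hl).coprime_iff_not_dvd.mpr hndvd).symm.pow_right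
  have hw_tors : l ^ (n + 1) • w = 0 := by
    rw [pow_succ, mul_smul]
    exact hM.prop.nsmul_eq_zero hw
  obtain ⟨c, hc⟩ := exists_zsmul_zsmul_eq_of_isCoprime hcop hw_tors
  refine ⟨-(c • m), neg_mem (zsmul_mem hm c), c • u, ?_⟩
  calc w - -(c • m) = c • (m + t • w) := by rw [sub_neg_eq_add, smul_add, hc, add_comm]
    _ = l ^ n • c • u := by rw [hu, smul_comm]

theorem exists_mem_pow_nsmul_eq (hl : l.Prime) (hM : Maximal (AvoidsMultiples (l ^ n)) M)
    (r : ℕ) {y : N} (hy : l ^ r • y ∈ M) : ∃ z ∈ M, l ^ r • z = l ^ r • y := by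
  induction r generalizing y with
  | zero => exact ⟨y, by simpa using hy, rfl⟩
  | succ r ih =>
    rcases le_or_gt n r with hnr | hrn
    · refine ⟨0, zero_mem M, ?_⟩
      have hpow : l ^ (r + 1) • y = l ^ n • l ^ (r + 1 - n) • y := by
        rw [← mul_smul, ← pow_add, Nat.add_sub_cancel' (by omega)]
      rw [smul_zero, hM.prop _ hy ⟨_, hpow.symm⟩]
    · rw [pow_succ', mul_smul] at hy
      obtain ⟨m, hm, hlm, v, hv⟩ := hM.exists_mem_sub_eq_pow_nsmul hl hy
      have hm_eq : m = l ^ r • (y - l ^ (n - r) • v) := by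
        rw [smul_sub, ← mul_smul, ← pow_add, Nat.add_sub_cancel' hrn.le, ← hv, sub_sub_cancel]
      obtain ⟨z, hz, hzm⟩ := ih (hm_eq ▸ hm)
      exact ⟨z, hz, by rw [pow_succ', mul_smul, mul_smul, hzm, ← hm_eq, hlm]⟩

theorem exists_mem_nsmul_eq (hl : l.Prime) (hM : Maximal (AvoidsMultiples (l ^ n)) M)
    {k : ℕ} (hk : k ≠ 0) {y : N} (hy : k • y ∈ M) : ∃ z ∈ M, k • z = k • y := by
  obtain ⟨r, k', hndvd, rfl⟩ := Nat.exists_eq_pow_mul_and_not_dvd hk l hl.ne_one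
  rw [mul_smul] at hy
  obtain ⟨z, hz, hzy⟩ := hM.exists_mem_pow_nsmul_eq hl r hy
  have hcop : IsCoprime (k' : ℤ) ((l ^ n : ℕ) : ℤ) :=
    Nat.isCoprime_iff_coprime.mpr ((hl.coprime_iff_not_dvd.mpr hndvd).symm.pow_right n)
  obtain ⟨c, hc⟩ := exists_zsmul_zsmul_eq_of_isCoprime hcop (hM.prop.nsmul_eq_zero hz)
  have hkc : k' • c • z = z := by rw [← natCast_zsmul, smul_comm, hc]
  exact ⟨c • z, zsmul_mem hz c, by rw [mul_smul, mul_smul, hkc, hzy]⟩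

end Maximal

end AddCommGroup

theorem maximal_subgroup_avoiding_lpow_is_pure_general
    {N : Type u} [AddCommGroup N] (l : ℕ) (hl : l.Prime) (n : ℕ)
    (M : AddSubgroup N)
    (hM : ∀ x ∈ M, (∃ y : N, l ^ n • y = x) → x = 0)
    (hmax : ∀ M' : AddSubgroup N, M ≤ M' →
      (∀ x ∈ M', (∃ y : N, l ^ n • y = x) → x = 0) → M' = M) :
    (∀ m : ℕ, 1 ≤ m → ∀ x ∈ M, (∃ y : N, m • y = x) → ∃ z ∈ M, m • z = x) ∧
    (∀ r : ℕ, ∀ x ∈ M, (∃ y : N, l ^ r • y = x) → ∃ z ∈ M, l ^ r • z = x) := by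
  have hMax : Maximal (AvoidsMultiples (l ^ n)) M :=
    ⟨hM, fun M' hM' hle => (hmax M' hle hM').le⟩
  constructor
  · rintro m hm _ hx ⟨y, rfl⟩
    exact hMax.exists_mem_nsmul_eq hl (by omega) hx
  · rintro r _ hx ⟨y, rfl⟩
    exact hMax.exists_mem_pow_nsmul_eq hl r hx

/-- Let `N` be an abelian group, `l` a prime, `n ≥ 1`, and `M` a
subgroup of `N` with `M ∩ lⁿN = 0` which is maximal among subgroups with this
property.  Then `M` is a pure subgroup of `N` (i.e. `M ∩ mN = mM` for all `m ≥ 1`,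
the nontrivial inclusion being `M ∩ mN ⊆ mM`); more precisely,
`M ∩ lʳN ⊆ lʳM` for every integer `r ≥ 0`. -/
theorem maximal_subgroup_avoiding_lpow_is_pure
    {N : Type u} [AddCommGroup N] (l : ℕ) (hl : l.Prime) (n : ℕ) (hn : 1 ≤ n)
    (M : AddSubgroup N)
    (hM : ∀ x ∈ M, (∃ y : N, l ^ n • y = x) → x = 0)
    (hmax : ∀ M' : AddSubgroup N, M ≤ M' →
      (∀ x ∈ M', (∃ y : N, l ^ n • y = x) → x = 0) → M' = M) :
    (∀ m : ℕ, 1 ≤ m → ∀ x ∈ M, (∃ y : N, m • y = x) → ∃ z ∈ M, m • z = x) ∧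
    (∀ r : ℕ, ∀ x ∈ M, (∃ y : N, l ^ r • y = x) → ∃ z ∈ M, l ^ r • z = x) :=
  maximal_subgroup_avoiding_lpow_is_pure_general l hl n M hM hmax
end

section
/- Let N be an abelian group, l a prime, and n ≥ 1 an integer. If M is a subgroup of N with M ∩ lⁿN = 0 and M is maximal among the subgroups with this property, then M is a direct summand of N, i.e., there exists a subgroup C of N with M ∩ C = 0 and M + C = N. -/
/-!
Maximality forces `M` to be pure with respect to `l`: if `l • z ∈ M` but `z ∉ M`, then `M + ⟨z⟩`
meets `lⁿN` in some `x ≠ 0`, and since the coefficient of `z` in `x` is prime to `l`, Bézout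
gives `z ≡ v • x` modulo `M`. This lets one divide by `l` inside `M`, up to an error in
`M ∩ lⁿN = 0`. As `lⁿM = 0`, the theorem then reduces to Kulikov's theorem that a bounded pure
subgroup is a direct summand. That is proved by induction on the bound, lifting a complement
of `lA` in `lG` to one of `A` in `G`; the base step `A ∩ lG = 0` is a Zorn argument over the
subgroups of `G` that contain `lG` and are disjoint from `A`.
-/

universe u

open AddSubgroup

section

variable {N : Type*} [AddCommGroup N] {l : ℕ}

theorem exists_sub_zsmul_mem_of_mem_sup_zmultiples (hl : l.Prime) {S : AddSubgroup N}
    {z x : N} (hlz : l • z ∈ S) (hx : x ∈ S ⊔ zmultiples z) (hxS : x ∉ S) :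
    ∃ v : ℤ, z - v • x ∈ S := by
  obtain ⟨s, hs, w, hw, rfl⟩ := mem_sup.mp hx
  obtain ⟨j, rfl⟩ := mem_zmultiples_iff.mp hw
  have hlj : ¬ (l : ℤ) ∣ j := by
    rintro ⟨t, rfl⟩
    refine hxS (add_mem hs ?_)
    rw [mul_comm, mul_zsmul, natCast_zsmul]
    exact zsmul_mem hlz t
  obtain ⟨u, v, huv⟩ := (Nat.prime_iff_prime_int.mp hl).coprime_iff_not_dvd.mpr hlj
  refine ⟨v, ?_⟩
  have hzv : z - v • (s + j • z) = u • (l • z) - v • s := by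
    linear_combination (norm := module) -(huv • z)
  rw [hzv]
  exact sub_mem (zsmul_mem hlz u) (zsmul_mem hs v)

theorem exists_disjoint_sup_eq_of_nsmul_mem_eq_zero (hl : l.Prime) {A G : AddSubgroup N}
    (hAG : A ≤ G) (hA : ∀ g ∈ G, l • g ∈ A → l • g = 0) : ∃ D, Disjoint A D ∧ A ⊔ D = G := by
  let S : Set (AddSubgroup N) := {C | C ≤ G ∧ Disjoint A C ∧ ∀ g ∈ G, l • g ∈ C}
  have hS : G.map (nsmulAddMonoidHom l) ∈ S := by
    refine ⟨map_le_iff_le_comap.mpr fun g hg => nsmul_mem hg l, disjoint_def.mpr ?_,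
      fun g hg => mem_map_of_mem _ hg⟩
    rintro _ ha ⟨g, hg, rfl⟩
    exact hA g hg ha
  have hchain : ∀ c ⊆ S, IsChain (· ≤ ·) c → ∀ C ∈ c, ∃ ub ∈ S, ∀ C' ∈ c, C' ≤ ub := by
    intro c hcS hc C hC
    refine ⟨sSup c, ⟨sSup_le fun C' hC' => (hcS hC').1, disjoint_def.mpr fun hxA hx => ?_,
      fun g hg => le_sSup hC ((hcS hC).2.2 g hg)⟩, fun _ => le_sSup⟩
    obtain ⟨C', hC', hxC'⟩ := (mem_sSup_of_directedOn ⟨C, hC⟩ hc.directedOn).mp hx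
    exact disjoint_def.mp (hcS hC').2.1 hxA hxC'
  obtain ⟨C, -, ⟨hCG, hAC, hlC⟩, hCmax⟩ := zorn_le_nonempty₀ S hchain _ hS
  refine ⟨C, hAC, le_antisymm (sup_le hAG hCG) fun x hxG => ?_⟩
  by_contra hx
  -- Maximality of `C` forces `C ⊔ ⟨x⟩` to meet `A`.
  have hAx : ¬ Disjoint A (C ⊔ zmultiples x) := fun h =>
    hx <| mem_sup_right <| hCmax ⟨sup_le hCG (zmultiples_le.mpr hxG), h,
      fun g hg => mem_sup_left (hlC g hg)⟩ le_sup_left (mem_sup_right (mem_zmultiples x))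
  obtain ⟨a, haA, ha, ha0⟩ : ∃ a ∈ A, a ∈ C ⊔ zmultiples x ∧ a ≠ 0 := by
    simpa [disjoint_def] using hAx
  obtain ⟨v, hv⟩ := exists_sub_zsmul_mem_of_mem_sup_zmultiples hl (hlC x hxG) ha
    fun haC => ha0 (disjoint_def.mp hAC haA haC)
  exact hx (by simpa using add_mem (mem_sup_right hv) (mem_sup_left (zsmul_mem haA v)))

/-- `A` is pure in `G` with respect to the powers of `l`: `A ∩ lᵏG = lᵏA` for all `k`. -/
def IsPowPure (l : ℕ) (A G : AddSubgroup N) : Prop :=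
  ∀ k : ℕ, ∀ g ∈ G, l ^ k • g ∈ A → ∃ a ∈ A, l ^ k • a = l ^ k • g

theorem IsPowPure.map_nsmul {A G : AddSubgroup N} (h : IsPowPure l A G) :
    IsPowPure l (A.map (nsmulAddMonoidHom l)) (G.map (nsmulAddMonoidHom l)) := by
  rintro k _ ⟨g, hg, rfl⟩ ⟨a, ha, hag⟩
  simp only [nsmulAddMonoidHom_apply] at hag ⊢
  obtain ⟨b, hb, hbg⟩ := h (k + 1) g hg (by rw [pow_succ, mul_smul, ← hag]; exact nsmul_mem ha l)
  exact ⟨l • b, mem_map_of_mem _ hb, by rwa [smul_smul, ← pow_succ, smul_smul, ← pow_succ]⟩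

theorem exists_disjoint_sup_eq_of_map_nsmul (hl : l.Prime) {A G K : AddSubgroup N}
    (hAG : A ≤ G) (hpure : ∀ g ∈ G, l • g ∈ A → ∃ a ∈ A, l • a = l • g)
    (hAK : Disjoint (A.map (nsmulAddMonoidHom l)) K)
    (hAKG : A.map (nsmulAddMonoidHom l) ⊔ K = G.map (nsmulAddMonoidHom l)) :
    ∃ D, Disjoint A D ∧ A ⊔ D = G := by
  let H := G ⊓ K.comap (nsmulAddMonoidHom l)
  obtain ⟨D, hAHD, hAHDH⟩ :=
    exists_disjoint_sup_eq_of_nsmul_mem_eq_zero hl (inf_le_right : A ⊓ H ≤ H) fun h hH hlh => by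
      obtain ⟨a, ha, hah⟩ := hpure h hH.1 (mem_inf.mp hlh).1
      exact disjoint_def.mp hAK ⟨a, ha, hah⟩ (mem_inf.mp hH).2
  have hDH : D ≤ H := hAHDH ▸ le_sup_right
  refine ⟨D, disjoint_def.mpr fun hxA hxD => disjoint_def.mp hAHD ⟨hxA, hDH hxD⟩ hxD,
    le_antisymm (sup_le hAG (hDH.trans inf_le_left)) fun g hg => ?_⟩
  obtain ⟨_, ⟨a, ha, rfl⟩, k, hk, hak⟩ := mem_sup.mp (hAKG ▸ mem_map_of_mem _ hg)
  have hgaH : g - a ∈ H :=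
    mem_inf.mpr ⟨sub_mem hg (hAG ha), by
      rwa [mem_comap, map_sub, ← hak, add_sub_cancel_left]⟩
  have hgaAD : g - a ∈ A ⊔ D :=
    sup_le_sup_right inf_le_left D (hAHDH ▸ hgaH)
  simpa using add_mem (mem_sup_left ha) hgaAD

theorem IsPowPure.exists_disjoint_sup_eq (hl : l.Prime) (n : ℕ) {A G : AddSubgroup N}
    (hAG : A ≤ G) (hpure : IsPowPure l A G) (hA : ∀ a ∈ A, l ^ n • a = 0) :
    ∃ D, Disjoint A D ∧ A ⊔ D = G := by
  induction n generalizing A G with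
  | zero =>
    obtain rfl : A = ⊥ := (eq_bot_iff_forall A).mpr fun a ha => by simpa using hA a ha
    exact ⟨G, disjoint_bot_left, bot_sup_eq G⟩
  | succ n ih =>
    obtain ⟨K, hAK, hAKG⟩ := ih (map_mono hAG) hpure.map_nsmul <| by
      rintro _ ⟨a, ha, rfl⟩
      simpa [smul_smul, ← pow_succ] using hA a ha
    exact exists_disjoint_sup_eq_of_map_nsmul hl hAG (by simpa using hpure 1) hAK hAKG

theorem exists_sub_zsmul_pow_nsmul_mem_of_maximal (hl : l.Prime) {n : ℕ} {M : AddSubgroup N}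
    (hM : ∀ x ∈ M, (∃ y : N, l ^ n • y = x) → x = 0)
    (hmax : ∀ M' : AddSubgroup N, M ≤ M' →
      (∀ x ∈ M', (∃ y : N, l ^ n • y = x) → x = 0) → M' = M)
    {z : N} (hz : l • z ∈ M) : ∃ (v : ℤ) (y : N), z - v • l ^ n • y ∈ M := by
  by_cases hzM : z ∈ M
  · exact ⟨0, 0, by simpa using hzM⟩
  obtain ⟨x, hx, ⟨y, rfl⟩, hx0⟩ :
      ∃ x ∈ M ⊔ zmultiples z, (∃ y : N, l ^ n • y = x) ∧ x ≠ 0 := by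
    by_contra! h
    exact hzM (hmax _ le_sup_left h ▸ mem_sup_right (mem_zmultiples z))
  obtain ⟨v, hv⟩ := exists_sub_zsmul_mem_of_mem_sup_zmultiples hl hz hx
    fun hxM => hx0 (hM _ hxM ⟨y, rfl⟩)
  exact ⟨v, y, hv⟩

theorem isPowPure_top_of_maximal (hl : l.Prime) {n : ℕ} {M : AddSubgroup N}
    (hM : ∀ x ∈ M, (∃ y : N, l ^ n • y = x) → x = 0)
    (hmax : ∀ M' : AddSubgroup N, M ≤ M' →
      (∀ x ∈ M', (∃ y : N, l ^ n • y = x) → x = 0) → M' = M) :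
    IsPowPure l M ⊤ := by
  intro k
  induction k with
  | zero => exact fun g _ hg => ⟨g, by simpa using hg, rfl⟩
  | succ k ih =>
    intro y _ hy
    rcases le_or_gt n k with hnk | hkn
    · obtain ⟨m, rfl⟩ := Nat.exists_eq_add_of_le hnk
      have hy0 : l ^ (n + m + 1) • y = 0 :=
        hM _ hy ⟨l ^ (m + 1) • y, by rw [smul_smul, ← pow_add, add_assoc]⟩
      exact ⟨0, zero_mem M, by rw [hy0, smul_zero]⟩
    obtain ⟨m, rfl⟩ := Nat.exists_eq_add_of_le hkn.le
    obtain ⟨v, y', hv⟩ := exists_sub_zsmul_pow_nsmul_mem_of_maximal hl hM hmax (z := l ^ k • y)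
      (by rwa [smul_smul, ← pow_succ'])
    have hsplit : l ^ k • y - v • l ^ (k + m) • y' = l ^ k • (y - v • l ^ m • y') := by
      rw [pow_add]; module
    obtain ⟨b, hb, hbk⟩ := ih (y - v • l ^ m • y') trivial (hsplit ▸ hv)
    -- `l ^ (k+1) • y - l ^ (k+1) • b` lies in `M ∩ lⁿN`, hence vanishes.
    have hdiff : l ^ (k + 1) • y - l ^ (k + 1) • b = l ^ (k + m) • (v • l • y') := by
      rw [pow_succ', mul_smul, mul_smul, hbk, pow_add]; module
    exact ⟨b, hb, (sub_eq_zero.mp (hM _ (sub_mem hy (nsmul_mem hb _)) ⟨_, hdiff.symm⟩)).symm⟩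

end

theorem maximal_subgroup_avoiding_lpow_is_direct_summand_general
    {N : Type u} [AddCommGroup N] (l : ℕ) (hl : l.Prime) (n : ℕ)
    (M : AddSubgroup N)
    (hM : ∀ x ∈ M, (∃ y : N, l ^ n • y = x) → x = 0)
    (hmax : ∀ M' : AddSubgroup N, M ≤ M' →
      (∀ x ∈ M', (∃ y : N, l ^ n • y = x) → x = 0) → M' = M) :
    ∃ C : AddSubgroup N, M ⊓ C = ⊥ ∧ M ⊔ C = ⊤ := by
  obtain ⟨C, hMC, hMCtop⟩ := (isPowPure_top_of_maximal hl hM hmax).exists_disjoint_sup_eq hl n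
    le_top fun a ha => hM _ (nsmul_mem ha _) ⟨a, rfl⟩
  exact ⟨C, disjoint_iff.mp hMC, hMCtop⟩

/-- Let `N` be an abelian group, `l` a prime, and `n ≥ 1`.  If `M` is a
subgroup of `N` with `M ∩ lⁿN = 0` and `M` is maximal among the subgroups with this
property, then `M` is a direct summand of `N`: there is a subgroup `C` of `N` with
`M ∩ C = 0` and `M + C = N`. -/
theorem maximal_subgroup_avoiding_lpow_is_direct_summand
    {N : Type u} [AddCommGroup N] (l : ℕ) (hl : l.Prime) (n : ℕ) (hn : 1 ≤ n)
    (M : AddSubgroup N)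
    (hM : ∀ x ∈ M, (∃ y : N, l ^ n • y = x) → x = 0)
    (hmax : ∀ M' : AddSubgroup N, M ≤ M' →
      (∀ x ∈ M', (∃ y : N, l ^ n • y = x) → x = 0) → M' = M) :
    ∃ C : AddSubgroup N, M ⊓ C = ⊥ ∧ M ⊔ C = ⊤ :=
  maximal_subgroup_avoiding_lpow_is_direct_summand_general l hl n M hM hmax
end

section
/- Let M be an abelian group such that the quotient M/nM is finite for every integer n ≥ 1. Then the first Ulm subgroup of M equals the largest divisible subgroup of M: U(M) = M_div. Equivalently, under this hypothesis the subgroup ⋂_{n ≥ 1} nM is a divisible group. -/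
universe u

/-- The first Ulm subgroup `U(M) = ⋂_{n ≥ 1} nM` of an abelian group `M`. -/
def ulmSubgroup (M : Type u) [AddCommGroup M] : AddSubgroup M where
  carrier := {x | ∀ n : ℕ, 1 ≤ n → ∃ y : M, n • y = x}
  zero_mem' := fun n _ => ⟨0, smul_zero n⟩
  add_mem' := by
    rintro a b ha hb n hn
    obtain ⟨y, hy⟩ := ha n hn
    obtain ⟨z, hz⟩ := hb n hn
    exact ⟨y + z, by rw [smul_add, hy, hz]⟩
  neg_mem' := by
    rintro a ha n hn
    obtain ⟨y, hy⟩ := ha n hn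
    exact ⟨-y, by rw [smul_neg, hy]⟩

/-- The subgroup `nM = {n • x : x ∈ M}` of an abelian group `M`. -/
def smulRange (n : ℕ) (M : Type u) [AddCommGroup M] : AddSubgroup M where
  carrier := Set.range fun x : M => n • x
  zero_mem' := ⟨0, smul_zero n⟩
  add_mem' := by rintro _ _ ⟨a, rfl⟩ ⟨b, rfl⟩; exact ⟨a + b, smul_add n a b⟩
  neg_mem' := by rintro _ ⟨a, rfl⟩; exact ⟨-a, smul_neg n a⟩

/-- A subgroup `D` of an abelian group is divisible if `nD = D` for all `n ≥ 1`. -/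
def IsDivisibleSubgroup {M : Type u} [AddCommGroup M] (D : AddSubgroup M) : Prop :=
  ∀ n : ℕ, 1 ≤ n → ∀ x ∈ D, ∃ y ∈ D, n • y = x

/-!
For `n ≥ 1` the indices `[nᵏM : nᵏ⁺¹M]` are finite and non-increasing in `k`, since multiplication
by `n` maps `nᵏM / nᵏ⁺¹M` onto `nᵏ⁺¹M / nᵏ⁺²M`. Once they are constant this map is injective, i.e.
the `n`-torsion of `nᵏM` lies in `nᵏ⁺¹M`, and this lets one choose an `n`-th root of any
`x ∈ ⋂ₖ nᵏM` inside `⋂ₖ nᵏM`. For `n = p` prime and `x ∈ U(M)` such a root `y` lies in `U(M)`: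
given `m = pᵃm'` with `p ∤ m'`, `y` differs from an element of `mM` by `p`-torsion in `pᵃM`, on
which `m'` acts invertibly. So `U(M)` is `p`-divisible for every prime `p`, hence divisible, and
it contains every divisible subgroup.
-/

namespace Subgroup

variable {G G' : Type*} [CommGroup G] [Group G'] {H K : Subgroup G}

@[to_additive]
theorem relIndex_map_map_eq_relIndex_sup_ker (f : G →* G') (hHK : H ≤ K) :
    (H.map f).relIndex (K.map f) = (H ⊔ f.ker).relIndex K := by
  rw [relIndex_map_map, ← relIndex_sup_left (K := H ⊔ f.ker) (H := K), sup_right_comm H f.ker K,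
    sup_of_le_right hHK]

@[to_additive]
theorem relIndex_map_map_dvd (f : G →* G') (hHK : H ≤ K) :
    (H.map f).relIndex (K.map f) ∣ H.relIndex K := by
  rw [relIndex_map_map_eq_relIndex_sup_ker f hHK]
  exact relIndex_dvd_of_le_left K le_sup_left

@[to_additive]
theorem inf_ker_le_of_relIndex_map_map_eq (f : G →* G') (hHK : H ≤ K) (h0 : H.relIndex K ≠ 0)
    (h : (H.map f).relIndex (K.map f) = H.relIndex K) : K ⊓ f.ker ≤ H := by
  rw [relIndex_map_map_eq_relIndex_sup_ker f hHK] at h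
  have h1 := relIndex_inf_mul_relIndex H (H ⊔ f.ker) K
  rw [inf_of_le_left (le_sup_left : H ≤ H ⊔ f.ker), h] at h1
  have : H.relIndex ((H ⊔ f.ker) ⊓ K) = 1 := by simpa [h0] using h1
  rw [relIndex_eq_one] at this
  exact fun x hx => this ⟨mem_sup_right hx.2, hx.1⟩

end Subgroup

section

variable {M : Type*} [AddCommGroup M]

theorem smulRange_le_smulRange_of_dvd {a b : ℕ} (h : a ∣ b) : smulRange b M ≤ smulRange a M := by
  rintro _ ⟨y, rfl⟩
  obtain ⟨c, rfl⟩ := h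
  exact ⟨c • y, (mul_smul a c y).symm⟩

theorem map_nsmul_smulRange (n m : ℕ) :
    (smulRange m M).map (nsmulAddMonoidHom n) = smulRange (n * m) M := by
  ext x
  constructor
  · rintro ⟨_, ⟨y, rfl⟩, rfl⟩
    exact ⟨y, by simp [mul_smul]⟩
  · rintro ⟨y, rfl⟩
    exact ⟨m • y, ⟨y, rfl⟩, by simp [mul_smul]⟩

theorem smulRange_inf_ker_nsmul_le_smulRange_mul {a b : ℕ} (h : a.Coprime b) (k : ℕ) :
    smulRange k M ⊓ (nsmulAddMonoidHom a).ker ≤ smulRange (k * b) M := by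
  rintro _ ⟨⟨w, rfl⟩, hw⟩
  obtain ⟨u, v, huv⟩ := Nat.isCoprime_iff_coprime.mpr h
  replace hw : a • k • w = 0 := hw
  refine ⟨v • w, ?_⟩
  linear_combination (norm := module) huv • (k • w) - u • hw

theorem exists_smulRange_pow_inf_ker_nsmul_le {n : ℕ}
    (hfin : ∀ k, Finite (M ⧸ smulRange (n ^ k) M)) :
    ∃ K, ∀ k, K ≤ k →
      smulRange (n ^ k) M ⊓ (nsmulAddMonoidHom n).ker ≤ smulRange (n ^ (k + 1)) M := by
  set P : ℕ → AddSubgroup M := fun k => smulRange (n ^ k) M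
  have hP : ∀ k, P (k + 1) = (P k).map (nsmulAddMonoidHom n) := fun k => by
    rw [map_nsmul_smulRange, ← pow_succ']
  have hle : ∀ k, P (k + 1) ≤ P k := fun k =>
    smulRange_le_smulRange_of_dvd (pow_dvd_pow n k.le_succ)
  set c : ℕ → ℕ := fun k => (P (k + 1)).relIndex (P k)
  have hc : ∀ k, c k ≠ 0 := fun k h =>
    AddSubgroup.index_ne_zero_of_finite (hH := hfin (k + 1))
      (AddSubgroup.index_eq_zero_of_relIndex_eq_zero h)
  have hanti : Antitone c := antitone_nat_of_succ_le fun k => by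
    refine Nat.le_of_dvd (Nat.pos_of_ne_zero (hc k)) ?_
    simpa only [c, hP] using AddSubgroup.relIndex_map_map_dvd (nsmulAddMonoidHom n) (hle k)
  obtain ⟨K, hK⟩ := WellFoundedGT.monotone_chain_condition (α := ℕᵒᵈ) ⟨c, hanti⟩
  refine ⟨K, fun k hk => ?_⟩
  refine AddSubgroup.inf_ker_le_of_relIndex_map_map_eq _ (hle k) (hc k) ?_
  rw [← hP, ← hP]
  exact ((hK k hk).symm.trans (hK (k + 1) (hk.trans k.le_succ))).symm

theorem exists_nsmul_eq_forall_mem_smulRange_pow {n : ℕ}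
    (hfin : ∀ k, Finite (M ⧸ smulRange (n ^ k) M)) {x : M}
    (hx : ∀ k, x ∈ smulRange (n ^ k) M) :
    ∃ y, n • y = x ∧ ∀ k, y ∈ smulRange (n ^ k) M := by
  obtain ⟨K, hK⟩ := exists_smulRange_pow_inf_ker_nsmul_le hfin
  obtain ⟨z, hz⟩ := hx (K + 1)
  have hnz : n • n ^ K • z = x := by rwa [smul_smul, ← pow_succ']
  refine ⟨n ^ K • z, hnz, ?_⟩
  have hge : ∀ j, K ≤ j → n ^ K • z ∈ smulRange (n ^ j) M := by
    intro j hj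
    induction j, hj using Nat.le_induction with
    | base => exact ⟨z, rfl⟩
    | succ j hj ih =>
      obtain ⟨w, hw⟩ := hx (j + 2)
      have ht : n ^ K • z - n ^ (j + 1) • w ∈
          smulRange (n ^ j) M ⊓ (nsmulAddMonoidHom n).ker := by
        refine AddSubgroup.mem_inf.mpr
          ⟨sub_mem ih (smulRange_le_smulRange_of_dvd (pow_dvd_pow n j.le_succ) ⟨w, rfl⟩), ?_⟩
        change n • (n ^ K • z - n ^ (j + 1) • w) = 0
        rw [smul_sub, hnz, smul_smul, ← pow_succ']
        exact sub_eq_zero.mpr hw.symm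
      simpa using add_mem (hK j hj ht) ⟨w, rfl⟩
  exact fun k => smulRange_le_smulRange_of_dvd (pow_dvd_pow n (le_max_left k K))
    (hge _ (le_max_right k K))

theorem mem_ulmSubgroup_of_prime_nsmul_mem {p : ℕ} (hp : p.Prime) {y : M}
    (hy : ∀ k, y ∈ smulRange (p ^ k) M) (hpy : p • y ∈ ulmSubgroup M) : y ∈ ulmSubgroup M := by
  intro m hm
  obtain ⟨a, m', hpm', rfl⟩ := Nat.exists_eq_pow_mul_and_not_dvd (n := m) (by omega) p hp.ne_one
  obtain ⟨z, hz⟩ := hpy (p * (p ^ a * m')) (Nat.mul_pos hp.pos hm)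
  have ht : y - (p ^ a * m') • z ∈ smulRange (p ^ a) M ⊓ (nsmulAddMonoidHom p).ker := by
    refine AddSubgroup.mem_inf.mpr ⟨sub_mem (hy a) ⟨m' • z, (mul_smul _ _ _).symm⟩, ?_⟩
    change p • (y - (p ^ a * m') • z) = 0
    rw [smul_sub, smul_smul, hz, sub_self]
  obtain ⟨w, hw⟩ := smulRange_inf_ker_nsmul_le_smulRange_mul
    (hp.coprime_iff_not_dvd.mpr hpm') (p ^ a) ht
  exact ⟨z + w, by rw [smul_add]; exact eq_sub_iff_add_eq'.mp hw⟩

theorem isDivisibleSubgroup_ulmSubgroup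
    (hfin : ∀ n : ℕ, 1 ≤ n → Finite (M ⧸ smulRange n M)) : IsDivisibleSubgroup (ulmSubgroup M) := by
  intro n
  induction n using Nat.recOnMul with
  | zero => exact fun h => absurd h (by norm_num)
  | one => exact fun _ x hx => ⟨x, hx, one_smul ℕ x⟩
  | prime p hp =>
    intro _ x hx
    obtain ⟨y, rfl, hy⟩ := exists_nsmul_eq_forall_mem_smulRange_pow
      (fun k => hfin _ (Nat.one_le_pow _ _ hp.pos)) (fun k => hx _ (Nat.one_le_pow _ _ hp.pos))
    exact ⟨y, mem_ulmSubgroup_of_prime_nsmul_mem hp hy hx, rfl⟩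
  | mul a b iha ihb =>
    intro hab x hx
    obtain ⟨z, hz, rfl⟩ := ihb (Nat.pos_of_mul_pos_left hab) x hx
    obtain ⟨y, hy, rfl⟩ := iha (Nat.pos_of_mul_pos_right hab) z hz
    exact ⟨y, hy, by rw [mul_comm, mul_smul]⟩

theorem IsDivisibleSubgroup.le_ulmSubgroup {D : AddSubgroup M} (hD : IsDivisibleSubgroup D) :
    D ≤ ulmSubgroup M := fun x hx n hn =>
  let ⟨y, _, hy⟩ := hD n hn x hx
  ⟨y, hy⟩

end

/-- Let `M` be an abelian group such that `M/nM` is finite for every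
`n ≥ 1`.  Then the first Ulm subgroup `U(M) = ⋂_{n ≥ 1} nM` equals the largest divisible
subgroup `M_div` of `M` (the sum of all divisible subgroups); equivalently, under this
hypothesis `U(M)` is itself a divisible subgroup. -/
theorem ulm_eq_div_of_finite_quotients (M : Type u) [AddCommGroup M]
    (hfin : ∀ n : ℕ, 1 ≤ n → Finite (M ⧸ smulRange n M)) :
    ulmSubgroup M = sSup {D : AddSubgroup M | IsDivisibleSubgroup D} ∧
    IsDivisibleSubgroup (ulmSubgroup M) := by
  have hdiv := isDivisibleSubgroup_ulmSubgroup hfin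
  exact ⟨le_antisymm (le_sSup hdiv) (sSup_le fun _ hD => hD.le_ulmSubgroup), hdiv⟩
end

section
/- Let M be an abelian group, l a prime, and suppose there exists x ∈ U(M) with x ∉ lU(M). If n ≥ 1 and xₙ ∈ M satisfies lⁿxₙ = x, then the image of xₙ in M/U(M) has order exactly lⁿ. In particular, M/U(M) contains elements of arbitrarily high l-power order. -/
universe u

theorem QuotientAddGroup.addOrderOf_mk_eq_prime_pow {G : Type*} [AddCommGroup G]
    {H : AddSubgroup G} {p : ℕ} [Fact p.Prime] {g : G} {n : ℕ}
    (hn : p ^ n • g ∉ H) (hn1 : p ^ (n + 1) • g ∈ H) :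
    addOrderOf (g : G ⧸ H) = p ^ (n + 1) := by
  refine addOrderOf_eq_prime_pow ?_ ?_ <;>
    rwa [← QuotientAddGroup.mk_nsmul, QuotientAddGroup.eq_zero_iff]

/-- Let `M` be an abelian group, `l` a prime, and suppose `x ∈ U(M)`
with `x ∉ l·U(M)`.  If `n ≥ 1` and `xₙ ∈ M` satisfies `lⁿ • xₙ = x`, then the image of
`xₙ` in `M/U(M)` has order exactly `lⁿ`.  In particular `M/U(M)` contains elements of
arbitrarily high `l`-power order. -/
theorem order_of_root_of_nondivisible_ulm_elt
    {M : Type u} [AddCommGroup M] (l : ℕ) (hl : l.Prime) (x : M)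
    (hx : x ∈ ulmSubgroup M) (hxl : ¬ ∃ y ∈ ulmSubgroup M, l • y = x) :
    (∀ n : ℕ, 1 ≤ n → ∀ xn : M, l ^ n • xn = x →
      addOrderOf (QuotientAddGroup.mk xn : M ⧸ ulmSubgroup M) = l ^ n) ∧
    (∀ n : ℕ, 1 ≤ n → ∃ z : M ⧸ ulmSubgroup M, addOrderOf z = l ^ n) := by
  have := Fact.mk hl
  have order_of_root : ∀ n : ℕ, 1 ≤ n → ∀ xn : M, l ^ n • xn = x →
      addOrderOf (QuotientAddGroup.mk xn : M ⧸ ulmSubgroup M) = l ^ n := by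
    rintro (_ | k) hk xn rfl
    · omega
    -- `l ^ k • xn ∈ U(M)` would make `x = l • (l ^ k • xn) ∈ l U(M)`.
    refine QuotientAddGroup.addOrderOf_mk_eq_prime_pow (fun hmem => hxl ⟨_, hmem, ?_⟩) hx
    rw [smul_smul, ← pow_succ']
  refine ⟨order_of_root, fun n hn => ?_⟩
  obtain ⟨y, hy⟩ := hx (l ^ n) (Nat.one_le_pow _ _ hl.pos)
  exact ⟨y, order_of_root n hn y hy⟩
end

section
/- Let M be an abelian group such that M/nM is finite for every integer n ≥ 1, and suppose that TM = 0, where TM is the inverse limit over n (ordered by divisibility, with transition maps given by multiplication) of the n-torsion subgroups Ker(n : M → M). Then the first Ulm subgroup U(M) is uniquely divisible, i.e., it is a divisible, torsion-free abelian group (hence a ℚ-vector space). -/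
universe u

/-!
As every `M/DM` is finite, the image of `M[k]` in `M/DM` has at most `|M/kM|` elements for all
`D`, so it stops growing along divisibility of `D`; hence `M[k] ∩ DM ⊆ U(M)` for a suitable `D`.
This makes `U(M)` divisible, and a torsion element of a divisible subgroup starts an infinite
chain of divisions, which assembles into an element of `TM`.
-/

open QuotientAddGroup Nat

def TorsionLimitTrivial (M : Type u) [AddCommGroup M] : Prop :=
  ∀ f : ℕ+ → M, (∀ n : ℕ+, (n : ℕ) • f n = 0) →
    (∀ m n : ℕ+, (m : ℕ) ∣ (n : ℕ) → ((n : ℕ) / (m : ℕ)) • f n = f m) → ∀ n : ℕ+, f n = 0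

variable {M : Type u} [AddCommGroup M]

lemma smulRange_mono {m n : ℕ} (h : m ∣ n) : smulRange n M ≤ smulRange m M := by
  obtain ⟨d, rfl⟩ := h
  rintro _ ⟨y, rfl⟩
  exact ⟨d • y, (mul_smul m d y).symm⟩

lemma ulmSubgroup_le_smulRange {n : ℕ} (hn : 1 ≤ n) : ulmSubgroup M ≤ smulRange n M :=
  fun _ hx => hx n hn

lemma card_ker_nsmul_eq_card_quotient [Finite M] (k : ℕ) :
    Nat.card (nsmulAddMonoidHom k : M →+ M).ker = Nat.card (M ⧸ smulRange k M) :=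
  AddSubgroup.index_range.symm

/-- The image of `M[k]` in `M/DM` lies in `(M/DM)[k]`, which is as large as `(M/DM)/k(M/DM)`,
a quotient of `M/kM`. -/
lemma card_map_ker_nsmul_le (D k : ℕ) [Finite (M ⧸ smulRange D M)]
    [Finite (M ⧸ smulRange k M)] :
    Nat.card ((nsmulAddMonoidHom k : M →+ M).ker.map (mk' (smulRange D M)))
      ≤ Nat.card (M ⧸ smulRange k M) := by
  set A := M ⧸ smulRange D M
  have hle : (nsmulAddMonoidHom k : M →+ M).ker.map (mk' (smulRange D M))
      ≤ (nsmulAddMonoidHom k : A →+ A).ker := by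
    rintro _ ⟨x, hx, rfl⟩
    simp only [SetLike.mem_coe, AddMonoidHom.mem_ker, nsmulAddMonoidHom_apply] at hx ⊢
    rw [← map_nsmul, hx, map_zero]
  have hmap : smulRange k M ≤ (smulRange k A).comap (mk' (smulRange D M)) := by
    rintro _ ⟨y, rfl⟩
    exact ⟨mk' _ y, (map_nsmul _ k y).symm⟩
  calc _ ≤ Nat.card (nsmulAddMonoidHom k : A →+ A).ker := AddSubgroup.card_le_of_le hle
    _ = Nat.card (A ⧸ smulRange k A) := card_ker_nsmul_eq_card_quotient k
    _ ≤ Nat.card (M ⧸ smulRange k M) :=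
      Nat.card_le_card_of_surjective _ <| map_surjective_of_surjective _ _ _
        ((mk'_surjective _).comp (mk'_surjective _)) hmap

lemma inf_le_of_card_map_le {H N N' : AddSubgroup M} [Finite (M ⧸ N')] (hN : N' ≤ N)
    (hcard : Nat.card (H.map (mk' N')) ≤ Nat.card (H.map (mk' N))) : H ⊓ N ≤ N' := by
  set π := QuotientAddGroup.map N' N (AddMonoidHom.id M) hN
  have hπ : (H.map (mk' N')).map π = H.map (mk' N) := by
    rw [AddSubgroup.map_map]; rfl
  have hinj : Function.Injective (π.addSubgroupMap (H.map (mk' N'))) :=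
    ((π.addSubgroupMap_surjective _).bijective_of_nat_card_le (hπ ▸ hcard)).injective
  rintro x ⟨hxH, hxN⟩
  have h0 : π.addSubgroupMap (H.map (mk' N')) ⟨mk' N' x, x, hxH, rfl⟩ = 0 :=
    Subtype.ext ((eq_zero_iff x).2 hxN)
  exact (eq_zero_iff x).1 (congrArg Subtype.val ((injective_iff_map_eq_zero _).1 hinj _ h0))

theorem exists_ker_nsmul_inf_smulRange_le_ulmSubgroup
    (hfin : ∀ n : ℕ, 1 ≤ n → Finite (M ⧸ smulRange n M)) {k : ℕ} (hk : 1 ≤ k) :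
    ∃ D, 1 ≤ D ∧ (nsmulAddMonoidHom k : M →+ M).ker ⊓ smulRange D M ≤ ulmSubgroup M := by
  classical
  set c : ℕ → ℕ := fun D =>
    Nat.card ((nsmulAddMonoidHom k : M →+ M).ker.map (mk' (smulRange D M)))
  have hbound : ∀ D, 1 ≤ D → c D ≤ Nat.card (M ⧸ smulRange k M) := fun D hD =>
    have := hfin D hD; have := hfin k hk; card_map_ker_nsmul_le D k
  obtain ⟨D, hD, hcD⟩ := Nat.findGreatest_spec (P := fun v => ∃ D, 1 ≤ D ∧ c D = v)
    (hbound 1 le_rfl) ⟨1, le_rfl, rfl⟩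
  have hmax : ∀ D', 1 ≤ D' → c D' ≤ c D := fun D' hD' =>
    hcD ▸ Nat.le_findGreatest (hbound D' hD') ⟨D', hD', rfl⟩
  refine ⟨D, hD, fun x hx r hr => ?_⟩
  have := hfin (D * r) (Nat.mul_le_mul hD hr)
  exact smulRange_mono (dvd_mul_left r D) <|
    inf_le_of_card_map_le (smulRange_mono (dvd_mul_right D r)) (hmax _ (Nat.mul_le_mul hD hr)) hx

theorem exists_mem_ulmSubgroup_nsmul_eq (hfin : ∀ n : ℕ, 1 ≤ n → Finite (M ⧸ smulRange n M))
    {x : M} (hx : x ∈ ulmSubgroup M) {m : ℕ} (hm : 1 ≤ m) :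
    ∃ y ∈ ulmSubgroup M, m • y = x := by
  obtain ⟨D, hD, hker⟩ := exists_ker_nsmul_inf_smulRange_le_ulmSubgroup hfin hm
  obtain ⟨z, hz⟩ := hx (m * D) (Nat.mul_le_mul hm hD)
  refine ⟨D • z, fun r hr => ?_, by rw [← mul_smul, hz]⟩
  obtain ⟨w, hw⟩ := hx (m * D * r) (Nat.mul_le_mul (Nat.mul_le_mul hm hD) hr)
  -- `D • z` and `(D * r) • w` differ by an element of `M[m] ∩ DM ⊆ U(M) ⊆ rM`.
  have hdiff : D • z - (D * r) • w ∈ (nsmulAddMonoidHom m : M →+ M).ker ⊓ smulRange D M := by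
    refine AddSubgroup.mem_inf.2 ⟨?_, sub_mem ⟨z, rfl⟩ ⟨r • w, (mul_smul D r w).symm⟩⟩
    rw [AddMonoidHom.mem_ker, nsmulAddMonoidHom_apply, smul_sub, ← mul_smul, ← mul_smul,
      ← mul_assoc, hz, hw, sub_self]
  have hw' : (D * r) • w ∈ smulRange r M := ⟨D • w, by rw [mul_comm, mul_smul]⟩
  show D • z ∈ smulRange r M
  simpa using add_mem (ulmSubgroup_le_smulRange hr (hker hdiff)) hw'

lemma factorial_div_smul_eq {g : ℕ → M} (hg : ∀ j, (j + 1) • g (j + 1) = g j) {i j : ℕ}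
    (hij : i ≤ j) : (j ! / i !) • g j = g i := by
  induction j, hij using Nat.le_induction with
  | base => rw [Nat.div_self (factorial_pos i), one_smul]
  | succ j hij ih =>
    rw [factorial_succ, Nat.mul_div_assoc _ (factorial_dvd_factorial hij), mul_comm, mul_smul,
      hg, ih]

lemma div_mul_factorial_pred {m m' : ℕ} (hm : 0 < m) (hm' : 0 < m') (h : m ∣ m') :
    m' / m * (m' - 1)! = (m - 1)! * (m' ! / m !) := by
  apply Nat.eq_of_mul_eq_mul_left hm
  rw [← mul_assoc, Nat.mul_div_cancel' h, mul_factorial_pred hm'.ne', ← mul_assoc,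
    mul_factorial_pred hm.ne', Nat.mul_div_cancel' (factorial_dvd_factorial (Nat.le_of_dvd hm' h))]

/-- A chain `g` with `(j + 1) • g (j + 1) = g j` and `n • g 0 = 0` yields the element
`m ↦ (n * (m - 1)!) • g m` of `TM`, whose component at `n` is `n ! • g n = g 0`. -/
lemma eq_zero_of_factorial_chain (hT : TorsionLimitTrivial M) {g : ℕ → M}
    (hg : ∀ j, (j + 1) • g (j + 1) = g j) {n : ℕ} (hn : 1 ≤ n) (hn0 : n • g 0 = 0) : g 0 = 0 := by
  have hfac : ∀ m, m ! • g m = g 0 := fun m => by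
    simpa using factorial_div_smul_eq hg (Nat.zero_le m)
  have htors : ∀ m : ℕ+, (m : ℕ) • (n * ((m : ℕ) - 1)!) • g m = 0 := fun m => by
    rw [← mul_smul, mul_left_comm, mul_factorial_pred m.ne_zero, mul_smul, hfac, hn0]
  have hcompat : ∀ m m' : ℕ+, (m : ℕ) ∣ (m' : ℕ) →
      ((m' : ℕ) / (m : ℕ)) • (n * ((m' : ℕ) - 1)!) • g m' = (n * ((m : ℕ) - 1)!) • g m := by
    intro m m' hmm'
    rw [← factorial_div_smul_eq hg (Nat.le_of_dvd m'.pos hmm'), ← mul_smul, ← mul_smul,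
      mul_left_comm, div_mul_factorial_pred m.pos m'.pos hmm', mul_assoc]
  simpa [mul_factorial_pred (by omega : n ≠ 0), hfac] using
    hT _ htors hcompat ⟨n, hn⟩

theorem eq_zero_of_nsmul_eq_zero_of_mem_divisible (hT : TorsionLimitTrivial M) {A : AddSubgroup M}
    (hA : ∀ y ∈ A, ∀ m : ℕ, 1 ≤ m → ∃ z ∈ A, m • z = y) {x : M} (hx : x ∈ A) {n : ℕ}
    (hn : 1 ≤ n) (hnx : n • x = 0) : x = 0 := by
  choose! d hdA hd using hA
  let g : ℕ → M := fun j => Nat.rec x (fun j y => d y (j + 1)) j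
  have hgA : ∀ j, g j ∈ A := fun j => by
    induction j with
    | zero => exact hx
    | succ j ih => exact hdA _ ih _ (Nat.le_add_left 1 j)
  exact eq_zero_of_factorial_chain (g := g) hT
    (fun j => hd _ (hgA j) _ (Nat.le_add_left 1 j)) hn hnx

/-- Let `M` be an abelian group such that `M/nM` is finite for every
`n ≥ 1`, and suppose `TM = 0`, where `TM = lim_n Ker(n : M → M)` is the inverse limit,
over positive integers `n` ordered by divisibility, of the `n`-torsion subgroups, the
transition map `Ker(n) → Ker(m)` for `m ∣ n` being multiplication by `n/m`.  (Here
`TM = 0` is expressed as: every compatible family of torsion elements is zero.)  Then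
the first Ulm subgroup `U(M)` is uniquely divisible: for every `n ≥ 1`, multiplication
by `n` is a bijection of `U(M)`, so `U(M)` is a divisible torsion-free group, i.e., a
`ℚ`-vector space. -/
theorem ulm_uniquely_divisible_of_torsionlimit_zero
    {M : Type u} [AddCommGroup M]
    (hfin : ∀ n : ℕ, 1 ≤ n → Finite (M ⧸ smulRange n M))
    (hT : ∀ f : ℕ+ → M, (∀ n : ℕ+, (n : ℕ) • f n = 0) →
      (∀ m n : ℕ+, (m : ℕ) ∣ (n : ℕ) → ((n : ℕ) / (m : ℕ)) • f n = f m) →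
      ∀ n : ℕ+, f n = 0) :
    ∀ n : ℕ, 1 ≤ n → Function.Bijective (fun x : ulmSubgroup M => n • x) := by
  have hdiv : ∀ y ∈ ulmSubgroup M, ∀ m : ℕ, 1 ≤ m → ∃ z ∈ ulmSubgroup M, m • z = y :=
    fun _ hy _ hm => exists_mem_ulmSubgroup_nsmul_eq hfin hy hm
  intro n hn
  refine ⟨fun x y hxy => ?_, fun x => ?_⟩
  · have hnxy : n • ((x : M) - y) = 0 := by
      rw [smul_sub, sub_eq_zero]
      simpa using congrArg Subtype.val hxy
    exact Subtype.ext <| sub_eq_zero.1 <|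
      eq_zero_of_nsmul_eq_zero_of_mem_divisible hT hdiv (sub_mem x.2 y.2) hn hnxy
  · obtain ⟨y, hy, hyx⟩ := hdiv x x.2 n hn
    exact ⟨⟨y, hy⟩, Subtype.ext hyx⟩
end

section
/- Let φ : M × N → ℤ be a bi-additive (ℤ-bilinear) pairing of abelian groups, and let l be a prime. Suppose the induced ℤ_l-bilinear pairing φ_l : M_l × N_l → ℤ_l on the l-adic completions has trivial left kernel (i.e., if x ∈ M_l satisfies φ_l(x, y) = 0 for all y ∈ N_l, then x = 0). If N/lN is finite and ⋂_{n ≥ 1} lⁿM = 0, then M is a free abelian group of finite rank. -/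
universe u v

/-!
Pairing with a set of representatives `R` of the finite group `N/lN` gives an additive map
`M → ℤ^R`. It is injective: if `φ(x, ·)` vanishes on `R`, then every value `φ(x, y)` is `l`
times another value, so it is divisible by every power of `l`; hence the constant sequence `x`
lies in the left kernel of `φ_l`, so `x ∈ ⋂ lⁿM = 0`. A subgroup of the finite free module
`ℤ^R` is free of finite rank.
-/

section Representatives

variable {N : Type v} [AddCommGroup N] {l : ℕ}

theorem exists_eq_mul_of_map_out_eq_zero (f : N →+ ℤ)
    (hf : ∀ q : N ⧸ smulRange l N, f q.out = 0) (y : N) : ∃ z : N, f y = l * f z := by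
  obtain ⟨z, hz⟩ : -(QuotientAddGroup.mk y : N ⧸ smulRange l N).out + y ∈ smulRange l N :=
    QuotientAddGroup.eq.mp (Quotient.out_eq _)
  have hy : y = (QuotientAddGroup.mk y : N ⧸ smulRange l N).out + l • z := by
    rw [show l • z = _ from hz]; abel
  exact ⟨z, by rw [hy, map_add, hf, map_nsmul, zero_add, nsmul_eq_mul]⟩

theorem pow_dvd_of_map_out_eq_zero (f : N →+ ℤ)
    (hf : ∀ q : N ⧸ smulRange l N, f q.out = 0) (n : ℕ) (y : N) : (l : ℤ) ^ n ∣ f y := by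
  induction n generalizing y with
  | zero => exact pow_zero (l : ℤ) ▸ one_dvd _
  | succ n ih =>
    obtain ⟨z, hz⟩ := exists_eq_mul_of_map_out_eq_zero f hf y
    rw [hz, pow_succ']
    exact mul_dvd_mul_left _ (ih z)

end Representatives

noncomputable def pairingWithRepresentatives {M : Type u} {N : Type v} [AddCommGroup M]
    [AddCommGroup N] (φ : M →+ N →+ ℤ) (l : ℕ) : M →+ (N ⧸ smulRange l N → ℤ) :=
  AddMonoidHom.pi fun q => φ.flip q.out

theorem pairingWithRepresentatives_injective {M : Type u} {N : Type v} [AddCommGroup M]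
    [AddCommGroup N] (φ : M →+ N →+ ℤ) (l : ℕ)
    (hker : ∀ x : ℕ → M, (∀ n : ℕ, x (n + 1) - x n ∈ smulRange (l ^ n) M) →
      (∀ (n : ℕ) (y : N), ((l : ℤ) ^ n) ∣ φ (x n) y) →
      ∀ n : ℕ, x n ∈ smulRange (l ^ n) M)
    (hsep : ∀ x : M, (∀ n : ℕ, x ∈ smulRange (l ^ n) M) → x = 0) :
    Function.Injective (pairingWithRepresentatives φ l) := by
  refine (injective_iff_map_eq_zero _).mpr fun x hx => hsep x ?_
  have hvanish : ∀ q : N ⧸ smulRange l N, φ x q.out = 0 := fun q => congrFun hx q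
  exact hker (fun _ => x) (fun n => (sub_self x).symm ▸ zero_mem _)
    fun n => pow_dvd_of_map_out_eq_zero (φ x) hvanish n

theorem exists_addEquiv_fin_of_injective {M : Type u} [AddCommGroup M] {ι : Type v} [Finite ι]
    (f : M →+ (ι → ℤ)) (hf : Function.Injective f) :
    ∃ r : ℕ, Nonempty (M ≃+ (Fin r → ℤ)) := by
  obtain ⟨r, b⟩ := Submodule.basisOfPid (Pi.basisFun ℤ ι) (LinearMap.range f.toIntLinearMap)
  let e : M ≃ₗ[ℤ] LinearMap.range f.toIntLinearMap := LinearEquiv.ofInjective _ hf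
  exact ⟨r, ⟨(b.map e.symm).equivFun.toAddEquiv⟩⟩

theorem free_of_pairing_with_trivial_left_kernel_general
    {M : Type u} {N : Type v} [AddCommGroup M] [AddCommGroup N]
    (φ : M →+ N →+ ℤ) (l : ℕ)
    (hker : ∀ x : ℕ → M, (∀ n : ℕ, x (n + 1) - x n ∈ smulRange (l ^ n) M) →
      (∀ (n : ℕ) (y : N), ((l : ℤ) ^ n) ∣ φ (x n) y) →
      ∀ n : ℕ, x n ∈ smulRange (l ^ n) M)
    (hfin : Finite (N ⧸ smulRange l N))
    (hsep : ∀ x : M, (∀ n : ℕ, x ∈ smulRange (l ^ n) M) → x = 0) :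
    ∃ r : ℕ, Nonempty (M ≃+ (Fin r → ℤ)) :=
  exists_addEquiv_fin_of_injective (pairingWithRepresentatives φ l)
    (pairingWithRepresentatives_injective φ l hker hsep)

/-- Let `φ : M × N → ℤ` be a bi-additive pairing of abelian groups and
`l` a prime.  Suppose the induced pairing `φ_l : M_l × N_l → ℤ_l` on the `l`-adic
completions has trivial left kernel.  (Elements of `M_l = lim_n M/lⁿM` are represented
by sequences `x : ℕ → M` with `x (n+1) ≡ x n mod lⁿM`; such an `x` pairs to zero with
every element of `N_l` exactly when `lⁿ ∣ φ(x n, y)` for all `n` and all `y ∈ N`, and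
it is the zero element of `M_l` exactly when `x n ∈ lⁿM` for all `n`.  The hypothesis
`hker` below is this triviality of the left kernel of `φ_l`.)  If `N/lN` is finite and
`⋂_{n ≥ 1} lⁿM = 0`, then `M` is a free abelian group of finite rank. -/
theorem free_of_pairing_with_trivial_left_kernel
    {M : Type u} {N : Type v} [AddCommGroup M] [AddCommGroup N]
    (φ : M →+ N →+ ℤ) (l : ℕ) (hl : l.Prime)
    (hker : ∀ x : ℕ → M, (∀ n : ℕ, x (n + 1) - x n ∈ smulRange (l ^ n) M) →
      (∀ (n : ℕ) (y : N), ((l : ℤ) ^ n) ∣ φ (x n) y) →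
      ∀ n : ℕ, x n ∈ smulRange (l ^ n) M)
    (hfin : Finite (N ⧸ smulRange l N))
    (hsep : ∀ x : M, (∀ n : ℕ, x ∈ smulRange (l ^ n) M) → x = 0) :
    ∃ r : ℕ, Nonempty (M ≃+ (Fin r → ℤ)) :=
  free_of_pairing_with_trivial_left_kernel_general φ l hker hfin hsep
end
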